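/- For every t > 0, ∫_{ℝⁿ} (∂/∂t) K_{t²/(4s)}(x,y) dx = −(t/(2s)) e^{−α|y|²/(2β)} (2π/β)^{n/2} (|y|²/β² + nα/β), where α = sinh(t²/(2s)) and β = cosh(t²/(2s)); in particular this quantity is nonpositive. -/

import Mathlib

/-!
In `x`, the kernel is a Gaussian: `K_u(x,y) = (sinh 2u)^(-n/2) e^(-‖y‖² coth(2u)/2) ·
exp(-coth(2u)/2 ‖x‖² + ⟪y, x⟫ / sinh 2u)`, so `∫ K_u(x,y) dx = (2π / cosh 2u)^(n/2) ·
exp(-tanh(2u) ‖y‖² / 2)`. Its `u`-derivative is `K_u` times a quadratic polynomial in `x`, which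
for `u` in a compact subinterval of `(0, ∞)` is dominated by a fixed Gaussian, so we may
differentiate under the integral sign. The claim is then the chain rule for `u = t² / (4s)`
applied to the closed form, whose derivative is visibly nonpositive.
-/

open Real MeasureTheory

/-- The Hermite (Mehler) heat kernel on ℝⁿ. -/
noncomputable def hermiteHeatKernel (n : ℕ) (u : ℝ) (x y : EuclideanSpace ℝ (Fin n)) : ℝ :=
  (Real.sinh (2 * u)) ^ (-(n : ℝ) / 2) *
    Real.exp (-(‖x‖ ^ 2 + ‖y‖ ^ 2) / 2 * (Real.cosh (2 * u) / Real.sinh (2 * u)) +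
      (inner ℝ x y : ℝ) / Real.sinh (2 * u))

open Filter Topology

section Gaussian

variable {V : Type*} [NormedAddCommGroup V] [InnerProductSpace ℝ V] [FiniteDimensional ℝ V]
  [MeasurableSpace V] [BorelSpace V]

theorem integrable_rexp_neg_mul_sq_norm_add {b : ℝ} (hb : 0 < b) (c : ℝ) (w : V) :
    Integrable (fun v : V ↦ rexp (-b * ‖v‖ ^ 2 + c * inner ℝ w v)) := by
  convert (GaussianFourier.integrable_cexp_neg_mul_sq_norm_add
    (show 0 < (b : ℂ).re from hb) c w).norm using 2 with v
  rw [← Complex.norm_exp_ofReal]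
  push_cast
  rfl

theorem integral_rexp_neg_mul_sq_norm_add {b : ℝ} (hb : 0 < b) (c : ℝ) (w : V) :
    ∫ v : V, rexp (-b * ‖v‖ ^ 2 + c * inner ℝ w v) =
      (π / b) ^ (Module.finrank ℝ V / 2 : ℝ) * rexp (c ^ 2 * ‖w‖ ^ 2 / (4 * b)) := by
  rw [← Complex.ofReal_inj, ← integral_complex_ofReal]
  push_cast
  rw [GaussianFourier.integral_cexp_neg_mul_sq_norm_add (show 0 < (b : ℂ).re from hb),
    ← Complex.ofReal_div, Complex.ofReal_cpow (by positivity)]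
  push_cast
  rfl

theorem integrable_add_mul_sq_norm_mul_rexp_neg_mul_sq_norm {c : ℝ} (hc : 0 < c) (a b : ℝ) :
    Integrable (fun v : V ↦ (a + b * ‖v‖ ^ 2) * rexp (-c * ‖v‖ ^ 2)) := by
  have hgauss (c' : ℝ) (hc' : 0 < c') : Integrable (fun v : V ↦ rexp (-c' * ‖v‖ ^ 2)) := by
    simpa using integrable_rexp_neg_mul_sq_norm_add hc' 0 (0 : V)
  have hmoment : Integrable (fun v : V ↦ ‖v‖ ^ 2 * rexp (-c * ‖v‖ ^ 2)) := by
    refine ((hgauss _ (half_pos hc)).const_mul (2 / c)).mono' (by fun_prop)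
      (.of_forall fun v ↦ ?_)
    rw [norm_of_nonneg (by positivity)]
    have hsq : ‖v‖ ^ 2 ≤ 2 / c * rexp (c / 2 * ‖v‖ ^ 2) :=
      calc ‖v‖ ^ 2 = 2 / c * (c / 2 * ‖v‖ ^ 2) := by field_simp
        _ ≤ 2 / c * rexp (c / 2 * ‖v‖ ^ 2) := by
          gcongr; linarith [add_one_le_exp (c / 2 * ‖v‖ ^ 2)]
    calc ‖v‖ ^ 2 * rexp (-c * ‖v‖ ^ 2)
        ≤ 2 / c * rexp (c / 2 * ‖v‖ ^ 2) * rexp (-c * ‖v‖ ^ 2) := by gcongr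
      _ = 2 / c * rexp (-(c / 2) * ‖v‖ ^ 2) := by rw [mul_assoc, ← exp_add]; ring_nf
  refine (((hgauss c hc).const_mul a).add (hmoment.const_mul b)).congr (.of_forall fun v ↦ ?_)
  simp only [Pi.add_apply]
  ring

end Gaussian

theorem hasDerivAt_rpow_div_cosh_mul_exp (p r u : ℝ) :
    HasDerivAt (fun u ↦ (2 * π / cosh (2 * u)) ^ (p / 2) *
        rexp (-sinh (2 * u) * r / (2 * cosh (2 * u))))
      (-(rexp (-sinh (2 * u) * r / (2 * cosh (2 * u))) * (2 * π / cosh (2 * u)) ^ (p / 2) *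
        (r / cosh (2 * u) ^ 2 + p * sinh (2 * u) / cosh (2 * u)))) u := by
  have hC : 0 < cosh (2 * u) := cosh_pos _
  have hB : 0 < 2 * π / cosh (2 * u) := by positivity
  have h2u : HasDerivAt (fun u : ℝ ↦ 2 * u) 2 u := by simpa using (hasDerivAt_id u).const_mul 2
  have hsinh := h2u.sinh
  have hcosh := h2u.cosh
  have hpow :=
    ((hasDerivAt_const u (2 * π)).div hcosh hC.ne').rpow_const (p := p / 2) (.inl hB.ne')
  have hexp := ((hsinh.neg.mul_const r).div (hcosh.const_mul 2) (by positivity)).exp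
  refine (hpow.mul hexp).congr_deriv ?_
  simp only [Pi.div_apply, Pi.neg_apply]
  rw [rpow_sub_one hB.ne']
  have hcs := cosh_sq_sub_sinh_sq (2 * u)
  generalize sinh (2 * u) = S at hcs ⊢
  generalize cosh (2 * u) = C at hC hB hcs ⊢
  generalize (2 * π / C) ^ (p / 2) = P
  generalize rexp _ = E
  field_simp
  linear_combination (-4 * π * r * E * P) * hcs

noncomputable def hermiteHeatKernelLogDeriv (n : ℕ) (u : ℝ) (x y : EuclideanSpace ℝ (Fin n)) :
    ℝ :=
  -n * (cosh (2 * u) / sinh (2 * u)) +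
    (‖x‖ ^ 2 + ‖y‖ ^ 2 - 2 * inner ℝ x y * cosh (2 * u)) / sinh (2 * u) ^ 2

section HermiteHeatKernel

variable {n : ℕ}

theorem continuous_hermiteHeatKernel (u : ℝ) (y : EuclideanSpace ℝ (Fin n)) :
    Continuous (fun x ↦ hermiteHeatKernel n u x y) := by
  unfold hermiteHeatKernel; fun_prop

theorem continuous_hermiteHeatKernelLogDeriv (u : ℝ) (y : EuclideanSpace ℝ (Fin n)) :
    Continuous (fun x ↦ hermiteHeatKernelLogDeriv n u x y) := by
  unfold hermiteHeatKernelLogDeriv; fun_prop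

theorem hasDerivAt_hermiteHeatKernel {u : ℝ} (hu : 0 < u) (x y : EuclideanSpace ℝ (Fin n)) :
    HasDerivAt (fun u ↦ hermiteHeatKernel n u x y)
      (hermiteHeatKernel n u x y * hermiteHeatKernelLogDeriv n u x y) u := by
  have hS : 0 < sinh (2 * u) := sinh_pos_iff.2 (by positivity)
  have h2u : HasDerivAt (fun u : ℝ ↦ 2 * u) 2 u := by simpa using (hasDerivAt_id u).const_mul 2
  have hsinh := h2u.sinh
  have hcosh := h2u.cosh
  have hexp := ((((hcosh.div hsinh hS.ne').const_mul (-(‖x‖ ^ 2 + ‖y‖ ^ 2) / 2)).add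
    ((hasDerivAt_const u (inner ℝ x y)).div hsinh hS.ne')).exp)
  refine ((hsinh.rpow_const (p := -(n : ℝ) / 2) (.inl hS.ne')).mul hexp).congr_deriv ?_
  unfold hermiteHeatKernel hermiteHeatKernelLogDeriv
  simp only [Pi.add_apply, Pi.div_apply]
  rw [rpow_sub_one hS.ne']
  have hcs := cosh_sq_sub_sinh_sq (2 * u)
  generalize sinh (2 * u) = S at hS hcs ⊢
  generalize cosh (2 * u) = C at hcs ⊢
  generalize rexp _ = E
  field_simp
  linear_combination (‖x‖ ^ 2 + ‖y‖ ^ 2) * E * hcs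

theorem hermiteHeatKernel_eq_mul_gaussian (u : ℝ) (x y : EuclideanSpace ℝ (Fin n)) :
    hermiteHeatKernel n u x y =
      sinh (2 * u) ^ (-(n : ℝ) / 2) * rexp (-‖y‖ ^ 2 * cosh (2 * u) / (2 * sinh (2 * u))) *
        rexp (-(cosh (2 * u) / (2 * sinh (2 * u))) * ‖x‖ ^ 2 + 1 / sinh (2 * u) * inner ℝ y x) := by
  rw [hermiteHeatKernel, mul_assoc, ← exp_add, real_inner_comm]
  ring_nf

theorem hermiteHeatKernel_nonneg {u : ℝ} (hu : 0 ≤ u) (x y : EuclideanSpace ℝ (Fin n)) :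
    0 ≤ hermiteHeatKernel n u x y :=
  mul_nonneg (rpow_nonneg (sinh_nonneg_iff.2 (by positivity)) _) (exp_pos _).le

theorem integrable_hermiteHeatKernel {u : ℝ} (hu : 0 < u) (y : EuclideanSpace ℝ (Fin n)) :
    Integrable (fun x ↦ hermiteHeatKernel n u x y) := by
  have hS : 0 < sinh (2 * u) := sinh_pos_iff.2 (by positivity)
  simp_rw [hermiteHeatKernel_eq_mul_gaussian]
  exact (integrable_rexp_neg_mul_sq_norm_add (by positivity) _ y).const_mul _

theorem integral_hermiteHeatKernel {u : ℝ} (hu : 0 < u) (y : EuclideanSpace ℝ (Fin n)) :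
    ∫ x, hermiteHeatKernel n u x y =
      (2 * π / cosh (2 * u)) ^ ((n : ℝ) / 2) *
        rexp (-sinh (2 * u) * ‖y‖ ^ 2 / (2 * cosh (2 * u))) := by
  have hS : 0 < sinh (2 * u) := sinh_pos_iff.2 (by positivity)
  have hC : 0 < cosh (2 * u) := cosh_pos _
  simp_rw [hermiteHeatKernel_eq_mul_gaussian, integral_const_mul]
  rw [integral_rexp_neg_mul_sq_norm_add (by positivity), finrank_euclideanSpace_fin,
    show π / (cosh (2 * u) / (2 * sinh (2 * u))) = 2 * π / cosh (2 * u) * sinh (2 * u) by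
      field_simp,
    mul_rpow (by positivity) hS.le]
  have hpow : sinh (2 * u) ^ (-(n : ℝ) / 2) * sinh (2 * u) ^ ((n : ℝ) / 2) = 1 := by
    rw [← rpow_add hS, neg_div, neg_add_cancel, rpow_zero]
  have hcs := cosh_sq_sub_sinh_sq (2 * u)
  calc _ = (2 * π / cosh (2 * u)) ^ ((n : ℝ) / 2) *
        (sinh (2 * u) ^ (-(n : ℝ) / 2) * sinh (2 * u) ^ ((n : ℝ) / 2)) *
        rexp (-‖y‖ ^ 2 * cosh (2 * u) / (2 * sinh (2 * u)) +
          (1 / sinh (2 * u)) ^ 2 * ‖y‖ ^ 2 / (4 * (cosh (2 * u) / (2 * sinh (2 * u))))) := by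
        rw [exp_add]; ring
    _ = _ := by
      rw [hpow, mul_one]
      congr 2
      field_simp
      linear_combination (-4 * ‖y‖ ^ 2) * hcs

theorem hermiteHeatKernel_le_of_mem_Icc {u₁ u₂ u : ℝ} (hu₁ : 0 < u₁) (hu : u ∈ Set.Icc u₁ u₂)
    (x y : EuclideanSpace ℝ (Fin n)) :
    hermiteHeatKernel n u x y ≤
      sinh (2 * u₁) ^ (-(n : ℝ) / 2) *
        rexp (-((cosh (2 * u₁) - 1) / (2 * sinh (2 * u₂))) * ‖x‖ ^ 2) := by
  have hS₁ : 0 < sinh (2 * u₁) := sinh_pos_iff.2 (by positivity)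
  have hS₁S : sinh (2 * u₁) ≤ sinh (2 * u) := sinh_le_sinh.2 (by linarith [hu.1])
  have hSS₂ : sinh (2 * u) ≤ sinh (2 * u₂) := sinh_le_sinh.2 (by linarith [hu.2])
  have hC₁C : cosh (2 * u₁) ≤ cosh (2 * u) := by
    rw [cosh_le_cosh, abs_of_pos (by positivity), abs_of_pos (by linarith [hu.1])]
    linarith [hu.1]
  have hC₁ : 1 ≤ cosh (2 * u₁) := one_le_cosh _
  unfold hermiteHeatKernel
  gcongr ?_ * rexp ?_
  · exact rpow_le_rpow_of_nonpos hS₁ hS₁S (by simp [neg_div]; positivity)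
  · -- `-(‖x‖² + ‖y‖²) C + 2⟪x, y⟫ = -‖x - y‖² - (C - 1)(‖x‖² + ‖y‖²)`
    have hnum : -(‖x‖ ^ 2 + ‖y‖ ^ 2) * cosh (2 * u) + 2 * inner ℝ x y ≤
        -((cosh (2 * u₁) - 1) * ‖x‖ ^ 2) := by
      nlinarith [norm_sub_sq_real x y, sq_nonneg ‖x - y‖, sq_nonneg ‖x‖, sq_nonneg ‖y‖]
    calc -(‖x‖ ^ 2 + ‖y‖ ^ 2) / 2 * (cosh (2 * u) / sinh (2 * u)) + inner ℝ x y / sinh (2 * u)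
        = (-(‖x‖ ^ 2 + ‖y‖ ^ 2) * cosh (2 * u) + 2 * inner ℝ x y) / (2 * sinh (2 * u)) := by
          field_simp
      _ ≤ -((cosh (2 * u₁) - 1) * ‖x‖ ^ 2 / (2 * sinh (2 * u))) := by
          rw [← neg_div]; exact div_le_div_of_nonneg_right hnum (by linarith)
      _ ≤ -((cosh (2 * u₁) - 1) * ‖x‖ ^ 2 / (2 * sinh (2 * u₂))) := by
          gcongr; linarith
      _ = _ := by ring

theorem abs_hermiteHeatKernelLogDeriv_le_of_mem_Icc {u₁ u₂ u : ℝ} (hu₁ : 0 < u₁)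
    (hu : u ∈ Set.Icc u₁ u₂) (x y : EuclideanSpace ℝ (Fin n)) :
    |hermiteHeatKernelLogDeriv n u x y| ≤
      n * (cosh (2 * u₂) / sinh (2 * u₁)) + (1 + cosh (2 * u₂)) / sinh (2 * u₁) ^ 2 * ‖y‖ ^ 2 +
        (1 + cosh (2 * u₂)) / sinh (2 * u₁) ^ 2 * ‖x‖ ^ 2 := by
  have hS₁ : 0 < sinh (2 * u₁) := sinh_pos_iff.2 (by positivity)
  have hS₁S : sinh (2 * u₁) ≤ sinh (2 * u) := sinh_le_sinh.2 (by linarith [hu.1])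
  have hS : 0 < sinh (2 * u) := hS₁.trans_le hS₁S
  have hCC₂ : cosh (2 * u) ≤ cosh (2 * u₂) := by
    rw [cosh_le_cosh, abs_of_pos (by linarith [hu.1]), abs_of_pos (by linarith [hu.1, hu.2])]
    linarith [hu.2]
  have hC : 0 < cosh (2 * u) := cosh_pos _
  have hinner := abs_real_inner_le_norm x y
  have hquad : |‖x‖ ^ 2 + ‖y‖ ^ 2 - 2 * inner ℝ x y * cosh (2 * u)| ≤
      (1 + cosh (2 * u₂)) * (‖x‖ ^ 2 + ‖y‖ ^ 2) := by
    rw [abs_le] at hinner ⊢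
    constructor <;> nlinarith [sq_nonneg (‖x‖ - ‖y‖), norm_nonneg x, norm_nonneg y]
  unfold hermiteHeatKernelLogDeriv
  calc _ ≤ |-(n : ℝ) * (cosh (2 * u) / sinh (2 * u))| +
        |‖x‖ ^ 2 + ‖y‖ ^ 2 - 2 * inner ℝ x y * cosh (2 * u)| / sinh (2 * u) ^ 2 := by
        rw [← abs_of_pos (pow_pos hS 2), ← abs_div, abs_of_pos (pow_pos hS 2)]
        exact abs_add_le _ _
    _ ≤ n * (cosh (2 * u₂) / sinh (2 * u₁)) +
        (1 + cosh (2 * u₂)) * (‖x‖ ^ 2 + ‖y‖ ^ 2) / sinh (2 * u₁) ^ 2 := by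
        rw [abs_mul, abs_neg, Nat.abs_cast, abs_of_pos (by positivity)]
        gcongr
    _ = _ := by ring

theorem hasDerivAt_integral_hermiteHeatKernel {u : ℝ} (hu : 0 < u)
    (y : EuclideanSpace ℝ (Fin n)) :
    HasDerivAt (fun u ↦ ∫ x, hermiteHeatKernel n u x y)
      (∫ x, hermiteHeatKernel n u x y * hermiteHeatKernelLogDeriv n u x y) u := by
  have hIcc : Set.Icc (u / 2) (2 * u) ∈ 𝓝 u := Icc_mem_nhds (by linarith) (by linarith)
  have hpos : ∀ v ∈ Set.Icc (u / 2) (2 * u), 0 < v := fun v hv ↦ by linarith [hv.1]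
  set γ := (cosh (2 * (u / 2)) - 1) / (2 * sinh (2 * (2 * u)))
  have hγ : 0 < γ := by
    have : 1 < cosh (2 * (u / 2)) := one_lt_cosh.2 (by positivity)
    have : 0 < sinh (2 * (2 * u)) := sinh_pos_iff.2 (by positivity)
    positivity
  have hbound := (integrable_add_mul_sq_norm_mul_rexp_neg_mul_sq_norm
    (V := EuclideanSpace ℝ (Fin n)) hγ
    (n * (cosh (2 * (2 * u)) / sinh (2 * (u / 2))) +
      (1 + cosh (2 * (2 * u))) / sinh (2 * (u / 2)) ^ 2 * ‖y‖ ^ 2)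
    ((1 + cosh (2 * (2 * u))) / sinh (2 * (u / 2)) ^ 2)).const_mul
    (sinh (2 * (u / 2)) ^ (-(n : ℝ) / 2))
  refine (hasDerivAt_integral_of_dominated_loc_of_deriv_le hIcc
    (.of_forall fun v ↦ (continuous_hermiteHeatKernel v y).aestronglyMeasurable)
    (integrable_hermiteHeatKernel hu y)
    ((continuous_hermiteHeatKernel u y).mul
      (continuous_hermiteHeatKernelLogDeriv u y)).aestronglyMeasurable
    (.of_forall fun x v hv ↦ ?_) hbound
    (.of_forall fun x v hv ↦ hasDerivAt_hermiteHeatKernel (hpos v hv) x y)).2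
  rw [norm_mul, norm_of_nonneg (hermiteHeatKernel_nonneg (hpos v hv).le x y), Real.norm_eq_abs,
    mul_comm (_ + _), ← mul_assoc]
  exact mul_le_mul (hermiteHeatKernel_le_of_mem_Icc (by linarith) hv x y)
    (abs_hermiteHeatKernelLogDeriv_le_of_mem_Icc (by linarith) hv x y) (abs_nonneg _)
    (by positivity)

theorem integral_hermiteHeatKernel_mul_logDeriv {u : ℝ} (hu : 0 < u)
    (y : EuclideanSpace ℝ (Fin n)) :
    ∫ x, hermiteHeatKernel n u x y * hermiteHeatKernelLogDeriv n u x y =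
      -(rexp (-sinh (2 * u) * ‖y‖ ^ 2 / (2 * cosh (2 * u))) *
        (2 * π / cosh (2 * u)) ^ ((n : ℝ) / 2) *
        (‖y‖ ^ 2 / cosh (2 * u) ^ 2 + n * sinh (2 * u) / cosh (2 * u))) := by
  have hmass : (fun v ↦ ∫ x, hermiteHeatKernel n v x y) =ᶠ[𝓝 u] fun v ↦
      (2 * π / cosh (2 * v)) ^ ((n : ℝ) / 2) *
        rexp (-sinh (2 * v) * ‖y‖ ^ 2 / (2 * cosh (2 * v))) :=
    (eventually_gt_nhds hu).mono fun v hv ↦ integral_hermiteHeatKernel hv y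
  exact ((hasDerivAt_integral_hermiteHeatKernel hu y).congr_of_eventuallyEq hmass.symm).unique
    (hasDerivAt_rpow_div_cosh_mul_exp n (‖y‖ ^ 2) u)

end HermiteHeatKernel

theorem stmt_12 (n : ℕ) (s t : ℝ) (hs : 0 < s) (ht : 0 < t)
    (y : EuclideanSpace ℝ (Fin n)) :
    (∫ x, deriv (fun τ : ℝ => hermiteHeatKernel n (τ ^ 2 / (4 * s)) x y) t) =
        -(t / (2 * s)) *
          Real.exp (-Real.sinh (t ^ 2 / (2 * s)) * ‖y‖ ^ 2 /
            (2 * Real.cosh (t ^ 2 / (2 * s)))) *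
          (2 * π / Real.cosh (t ^ 2 / (2 * s))) ^ ((n : ℝ) / 2) *
          (‖y‖ ^ 2 / Real.cosh (t ^ 2 / (2 * s)) ^ 2 +
            n * Real.sinh (t ^ 2 / (2 * s)) / Real.cosh (t ^ 2 / (2 * s))) ∧
      (∫ x, deriv (fun τ : ℝ => hermiteHeatKernel n (τ ^ 2 / (4 * s)) x y) t) ≤ 0 := by
  have hu : 0 < t ^ 2 / (4 * s) := by positivity
  have htime : HasDerivAt (fun τ : ℝ ↦ τ ^ 2 / (4 * s)) (t / (2 * s)) t := by
    refine ((hasDerivAt_pow 2 t).div_const (4 * s)).congr_deriv ?_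
    field_simp; ring
  have hchain (x : EuclideanSpace ℝ (Fin n)) :
      deriv (fun τ : ℝ ↦ hermiteHeatKernel n (τ ^ 2 / (4 * s)) x y) t =
        t / (2 * s) * (hermiteHeatKernel n (t ^ 2 / (4 * s)) x y *
          hermiteHeatKernelLogDeriv n (t ^ 2 / (4 * s)) x y) := by
    exact ((hasDerivAt_hermiteHeatKernel hu x y).comp t htime).deriv.trans (mul_comm _ _)
  simp_rw [hchain, integral_const_mul, integral_hermiteHeatKernel_mul_logDeriv hu,
    show 2 * (t ^ 2 / (4 * s)) = t ^ 2 / (2 * s) by ring]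
  refine ⟨by ring, mul_nonpos_of_nonneg_of_nonpos (by positivity) (neg_nonpos.2 ?_)⟩
  have : 0 < sinh (t ^ 2 / (2 * s)) := sinh_pos_iff.2 (by positivity)
  positivity
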